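/- arXiv:2207.13938 — 2 statements merged into one kernel-verified Lean document; each statement's English description precedes it below -/
import Mathlib

section
/- Let L₁, L₂ be algebraic frames, α : L₁ → L₂ join-preserving and compact-element-preserving. Then α is a frame homomorphism (preserves finite meets) if and only if for every finite set S of compact elements of L₁ and every compact k of L₂ with k ≤ ⨅ α[S], there exists a compact c of L₁ with c ≤ ⨅S and k ≤ α(c). -/
/-- Compactness in a complete lattice, as defined in the older Mathlib (Dec 2024). -/
def CompleteLattice.IsCompactElement {α : Type*} [CompleteLattice α] (k : α) :=
  ∀ s : Set α, k ≤ sSup s → ∃ t : Finset α, ↑t ⊆ s ∧ k ≤ t.sup id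

/-- Let `α : L₁ → L₂` between algebraic frames preserve arbitrary joins and compact
elements.  Then `α` is a frame homomorphism (preserves finite meets) iff for every
finite set `S` of compact elements of `L₁` and every compact `k` of `L₂` with
`k ≤ ⨅ α[S]`, there is a compact `c` of `L₁` with `c ≤ ⨅ S` and `k ≤ α c`. -/
theorem frame_hom_iff_compact_interpolation {L₁ L₂ : Type*} [Order.Frame L₁] [Order.Frame L₂]
    (halg₁ : ∀ a : L₁, a = sSup {k : L₁ | CompleteLattice.IsCompactElement k ∧ k ≤ a})
    (halg₂ : ∀ a : L₂, a = sSup {k : L₂ | CompleteLattice.IsCompactElement k ∧ k ≤ a})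
    (α : L₁ → L₂)
    (hjoin : ∀ S : Set L₁, α (sSup S) = sSup (α '' S))
    (hcomp : ∀ k : L₁, CompleteLattice.IsCompactElement k →
      CompleteLattice.IsCompactElement (α k)) :
    ((∀ a b : L₁, α (a ⊓ b) = α a ⊓ α b) ∧ α ⊤ = ⊤) ↔
    (∀ S : Finset L₁, (∀ c ∈ S, CompleteLattice.IsCompactElement c) →
      ∀ k : L₂, CompleteLattice.IsCompactElement k → k ≤ S.inf α →
        ∃ c : L₁, CompleteLattice.IsCompactElement c ∧ c ≤ S.inf id ∧ k ≤ α c) := by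
  classical
  have hmono : Monotone α := by
    intro a b hab
    have h : α (sSup {a, b}) = sSup (α '' {a, b}) := hjoin _
    rw [sSup_pair, sup_eq_right.mpr hab, Set.image_pair, sSup_pair] at h
    rw [h]; exact le_sup_left
  -- key interpolation lemma below a single element
  have hkey : ∀ a : L₁, ∀ k : L₂, CompleteLattice.IsCompactElement k → k ≤ α a →
      ∃ c : L₁, CompleteLattice.IsCompactElement c ∧ c ≤ a ∧ k ≤ α c := by
    intro a k hk hka
    have ha : α a = sSup (α '' {c : L₁ | CompleteLattice.IsCompactElement c ∧ c ≤ a}) := by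
      conv_lhs => rw [halg₁ a]
      exact hjoin _
    rw [ha] at hka
    obtain ⟨t, hts, hkt⟩ := hk _ hka
    have hex : ∀ x : {x // x ∈ t}, ∃ c : L₁,
        (CompleteLattice.IsCompactElement c ∧ c ≤ a) ∧ α c = x.1 := fun x => hts x.2
    choose f hf1 hf2 using hex
    refine ⟨t.attach.sup f, ?_, ?_, ?_⟩
    · exact (CompleteLattice.isCompactElement_iff_exists_le_sSup_of_le_sSup _ _).mp
        (CompleteLattice.isCompactElement_finsetSup _ (fun x _ =>
          (CompleteLattice.isCompactElement_iff_exists_le_sSup_of_le_sSup _ _).mpr (hf1 x).1))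
    · exact Finset.sup_le fun x _ => (hf1 x).2
    · refine hkt.trans (Finset.sup_le fun x hx => ?_)
      have hxe : x = α (f ⟨x, hx⟩) := (hf2 ⟨x, hx⟩).symm
      show id x ≤ _
      rw [id, hxe]
      exact hmono (Finset.le_sup (Finset.mem_attach _ _))
  constructor
  · rintro ⟨hmeet, htop⟩ S _ k hk hkS
    have h : ∀ T : Finset L₁, T.inf α = α (T.inf id) := by
      intro T
      induction T using Finset.induction with
      | empty => simp [htop]
      | insert _ _ h ih => simp [Finset.inf_insert, ih, hmeet]
    rw [h S] at hkS
    exact hkey _ k hk hkS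
  · intro H
    have htop : α ⊤ = ⊤ := by
      refine top_unique ?_
      conv_lhs => rw [halg₂ (⊤ : L₂)]
      refine sSup_le ?_
      rintro k ⟨hk, -⟩
      obtain ⟨c, -, -, hkc⟩ := H ∅ (by simp) k hk (by simp)
      exact hkc.trans (hmono le_top)
    refine ⟨fun a b => le_antisymm (le_inf (hmono inf_le_left) (hmono inf_le_right)) ?_, htop⟩
    conv_lhs => rw [halg₂ (α a ⊓ α b)]
    refine sSup_le ?_
    rintro k ⟨hk, hkab⟩
    obtain ⟨c, hc, hca, hkc⟩ := hkey a k hk (hkab.trans inf_le_left)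
    obtain ⟨d, hd, hdb, hkd⟩ := hkey b k hk (hkab.trans inf_le_right)
    have hS : ∀ x ∈ ({c, d} : Finset L₁), CompleteLattice.IsCompactElement x := by
      intro x hx
      rcases Finset.mem_insert.mp hx with rfl | hx
      · exact hc
      · rw [Finset.mem_singleton.mp hx]; exact hd
    have hkinf : k ≤ ({c, d} : Finset L₁).inf α := by
      simp only [Finset.inf_insert, Finset.inf_singleton]
      exact le_inf hkc hkd
    obtain ⟨e, he, hecd, hke⟩ := H {c, d} hS k hk hkinf
    have hinf : ({c, d} : Finset L₁).inf id = c ⊓ d := by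
      simp [Finset.inf_insert]
    refine hke.trans (hmono ?_)
    rw [hinf] at hecd
    exact hecd.trans (inf_le_inf hca hdb)
end

section
/- Let M₁, M₂ be bounded distributive meet-semilattices and α : M₁ → M₂ a meet-semilattice homomorphism. Suppose that for every finite S ⊆ M₁ and every upper bound x of α[S] in M₂ there is an upper bound c of S in M₁ with α(c) ≤ x. Then for every prime filter P of M₂, the preimage α⁻¹(P) is a prime filter of M₁. -/
/-- A filter of a meet-semilattice: a nonempty upset closed under finite meets. -/
def IsFilter {N : Type*} [SemilatticeInf N] (F : Set N) : Prop :=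
  F.Nonempty ∧ IsUpperSet F ∧ ∀ a ∈ F, ∀ b ∈ F, a ⊓ b ∈ F

/-- A prime filter: a proper filter `P` such that `F ∩ G ⊆ P` implies `F ⊆ P` or
`G ⊆ P` for all filters `F`, `G`. -/
def IsPrimeFilter {N : Type*} [SemilatticeInf N] (P : Set N) : Prop :=
  IsFilter P ∧ P ≠ Set.univ ∧
    ∀ F G : Set N, IsFilter F → IsFilter G → F ∩ G ⊆ P → F ⊆ P ∨ G ⊆ P

/-- Let `M₁`, `M₂` be bounded distributive meet-semilattices and `α : M₁ → M₂` a
meet-semilattice homomorphism (preserving `⊓`, `⊤`, `⊥`) such that for every finite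
`S ⊆ M₁` and every upper bound `x` of `α[S]` there is an upper bound `c` of `S` with
`α c ≤ x`.  Then the preimage of a prime filter is a prime filter. -/
theorem preimage_prime_filter {M₁ M₂ : Type*}
    [SemilatticeInf M₁] [BoundedOrder M₁] [SemilatticeInf M₂] [BoundedOrder M₂]
    (hd₁ : ∀ a b c : M₁, a ⊓ b ≤ c → ∃ a' b' : M₁, a ≤ a' ∧ b ≤ b' ∧ a' ⊓ b' = c)
    (hd₂ : ∀ a b c : M₂, a ⊓ b ≤ c → ∃ a' b' : M₂, a ≤ a' ∧ b ≤ b' ∧ a' ⊓ b' = c)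
    (α : M₁ → M₂)
    (hinf : ∀ a b : M₁, α (a ⊓ b) = α a ⊓ α b)
    (htop : α ⊤ = ⊤) (hbot : α ⊥ = ⊥)
    (hub : ∀ S : Finset M₁, ∀ x : M₂, (∀ s ∈ S, α s ≤ x) →
      ∃ c : M₁, (∀ s ∈ S, s ≤ c) ∧ α c ≤ x) :
    ∀ P : Set M₂, IsPrimeFilter P → IsPrimeFilter (α ⁻¹' P) := by
  rintro P ⟨⟨hne, hup, hmeet⟩, hproper, hprime⟩
  have hmono : ∀ a b : M₁, a ≤ b → α a ≤ α b := by
    intro a b h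
    have : α a = α a ⊓ α b := by rw [← hinf, inf_eq_left.mpr h]
    rw [this]; exact inf_le_right
  have htopP : (⊤ : M₂) ∈ P := by
    obtain ⟨x, hx⟩ := hne; exact hup le_top hx
  refine ⟨⟨⟨⊤, by simp [Set.mem_preimage, htop, htopP]⟩, ?_, ?_⟩, ?_, ?_⟩
  · intro a b hab ha
    exact hup (hmono a b hab) ha
  · intro a ha b hb
    simp only [Set.mem_preimage, hinf]
    exact hmeet _ ha _ hb
  · intro h
    have h1 : (⊥ : M₁) ∈ α ⁻¹' P := h ▸ Set.mem_univ _
    have hbotP : (⊥ : M₂) ∈ P := by simpa [hbot] using h1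
    apply hproper
    ext x
    simp only [Set.mem_univ, iff_true]
    exact hup (bot_le : (⊥ : M₂) ≤ x) hbotP
  · intro F G hF hG hsub
    set F' := {x : M₂ | ∃ f ∈ F, α f ≤ x} with hF'def
    set G' := {x : M₂ | ∃ g ∈ G, α g ≤ x} with hG'def
    have hF' : IsFilter F' := by
      obtain ⟨f₀, hf₀⟩ := hF.1
      refine ⟨⟨α f₀, f₀, hf₀, le_rfl⟩, ?_, ?_⟩
      · rintro x y hxy ⟨f, hf, hfx⟩
        exact ⟨f, hf, hfx.trans hxy⟩
      · rintro x ⟨f, hf, hfx⟩ y ⟨g, hg, hgy⟩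
        exact ⟨f ⊓ g, hF.2.2 _ hf _ hg, by
          rw [hinf]; exact inf_le_inf hfx hgy⟩
    have hG' : IsFilter G' := by
      obtain ⟨g₀, hg₀⟩ := hG.1
      refine ⟨⟨α g₀, g₀, hg₀, le_rfl⟩, ?_, ?_⟩
      · rintro x y hxy ⟨g, hg, hgx⟩
        exact ⟨g, hg, hgx.trans hxy⟩
      · rintro x ⟨f, hf, hfx⟩ y ⟨g, hg, hgy⟩
        exact ⟨f ⊓ g, hG.2.2 _ hf _ hg, by
          rw [hinf]; exact inf_le_inf hfx hgy⟩
    have hsub' : F' ∩ G' ⊆ P := by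
      rintro x ⟨⟨f, hf, hfx⟩, ⟨g, hg, hgx⟩⟩
      classical
      obtain ⟨c, hc, hcx⟩ := hub {f, g} x (by
        intro s hs
        rcases Finset.mem_insert.mp hs with rfl | hs
        · exact hfx
        · rw [Finset.mem_singleton.mp hs]; exact hgx)
      have hcF : c ∈ F := hF.2.1 (hc f (by simp)) hf
      have hcG : c ∈ G := hG.2.1 (hc g (by simp)) hg
      exact hup hcx (hsub ⟨hcF, hcG⟩)
    rcases hprime F' G' hF' hG' hsub' with h | h
    · exact Or.inl fun f hf => h ⟨f, hf, le_rfl⟩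
    · exact Or.inr fun g hg => h ⟨g, hg, le_rfl⟩
end
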